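/- arXiv:math/0510063 — 4 statements merged into one kernel-verified Lean document; each statement's English description precedes it below -/
import Mathlib

section
/- In the polynomial ring ℚ[t], one has the identity 4·(g(t)² − f(t)³) = 27·(4t⁵ + 15t⁴ + 38t³ + 61t² + 62t + 59), where f(t) = t⁸+6t⁷+21t⁶+50t⁵+86t⁴+114t³+109t²+74t+28 and g(t) = t¹²+9t¹¹+45t¹⁰+156t⁹+408t⁸+846t⁷+1416t⁶+1932t⁵+2136t⁴+1873t³+(2517t²+1167t+299)/2. In particular, g² − f³ is a nonzero constant multiple of a quintic, so the discriminant of the elliptic fibration y² = x³ − 27f(t)x + 54g(t) vanishes at exactly five finite values of t. -/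
/-!
Doubling `g` clears its denominators, and `4 (g² - f³) = (2g)² - 4f³` is then an identity of
integer polynomials. The quintic `q` is coprime to its derivative, witnessed by an explicit
Bézout identity `a q + b q' = 1`, so over an algebraically closed field it has `deg q = 5`
distinct roots.
-/

open scoped Classical

open Polynomial

theorem Polynomial.two_mul_C_div_two {K : Type*} [Field K] [NeZero (2 : K)] (a : K) :
    (2 : K[X]) * C (a / 2) = C a := by
  rw [← C_ofNat, ← C_mul, mul_div_cancel₀ a two_ne_zero]

theorem Polynomial.Separable.card_toFinset_aroots {K L : Type*} [Field K] [Field L] [IsAlgClosed L]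
    [Algebra K L] [DecidableEq L] {p : K[X]} (hp : p.Separable) :
    (p.aroots L).toFinset.card = p.natDegree := by
  rw [Multiset.toFinset_card_of_nodup (nodup_roots hp.map), IsAlgClosed.card_aroots_eq_natDegree]

namespace IronShioda

noncomputable def f : ℚ[X] := X ^ 8 + 6 * X ^ 7 + 21 * X ^ 6 + 50 * X ^ 5 + 86 * X ^ 4 +
    114 * X ^ 3 + 109 * X ^ 2 + 74 * X + 28

noncomputable def g : ℚ[X] := X ^ 12 + 9 * X ^ 11 + 45 * X ^ 10 + 156 * X ^ 9 + 408 * X ^ 8 +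
    846 * X ^ 7 + 1416 * X ^ 6 + 1932 * X ^ 5 + 2136 * X ^ 4 + 1873 * X ^ 3 +
    C (2517 / 2 : ℚ) * X ^ 2 + C (1167 / 2 : ℚ) * X + C (299 / 2 : ℚ)

noncomputable def q : ℚ[X] := 4 * X ^ 5 + 15 * X ^ 4 + 38 * X ^ 3 + 61 * X ^ 2 + 62 * X + 59

theorem two_mul_g : 2 * g = 2 * X ^ 12 + 18 * X ^ 11 + 90 * X ^ 10 + 312 * X ^ 9 +
    816 * X ^ 8 + 1692 * X ^ 7 + 2832 * X ^ 6 + 3864 * X ^ 5 + 4272 * X ^ 4 +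
    3746 * X ^ 3 + 2517 * X ^ 2 + 1167 * X + 299 := by
  have h₂ := two_mul_C_div_two (2517 : ℚ)
  have h₁ := two_mul_C_div_two (1167 : ℚ)
  have h₀ := two_mul_C_div_two (299 : ℚ)
  simp only [map_ofNat] at h₀ h₁ h₂
  rw [g]
  linear_combination X ^ 2 * h₂ + X * h₁ + h₀

theorem four_mul_g_sq_sub_f_cube : 4 * (g ^ 2 - f ^ 3) = 27 * q := by
  have h := two_mul_g
  rw [f, q]
  -- `4g² - G² = (2g + G)(2g - G)`, where `G` is the right-hand side of `two_mul_g`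
  linear_combination (2 * g + (2 * X ^ 12 + 18 * X ^ 11 + 90 * X ^ 10 + 312 * X ^ 9 +
      816 * X ^ 8 + 1692 * X ^ 7 + 2832 * X ^ 6 + 3864 * X ^ 5 + 4272 * X ^ 4 +
      3746 * X ^ 3 + 2517 * X ^ 2 + 1167 * X + 299)) * h

theorem g_sq_sub_f_cube : g ^ 2 - f ^ 3 = C (27 / 4) * q := by
  have h : (4 : ℚ[X]) * C (27 / 4) = 27 := by
    rw [← C_ofNat, ← C_mul, mul_div_cancel₀ (27 : ℚ) four_ne_zero, map_ofNat]
  apply mul_left_cancel₀ (by norm_num : (4 : ℚ[X]) ≠ 0)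
  linear_combination four_mul_g_sq_sub_f_cube - q * h

theorem derivative_q : derivative q = 20 * X ^ 4 + 60 * X ^ 3 + 114 * X ^ 2 + 122 * X + 62 := by
  rw [q]
  simp only [derivative_add, derivative_mul, derivative_X_pow, derivative_X,
    derivative_ofNat, C_eq_natCast]
  push_cast
  ring

theorem separable_q : q.Separable := by
  have h : (54872 : ℚ[X]) * C (54872 : ℚ)⁻¹ = 1 := by
    rw [← C_ofNat, ← C_mul, mul_inv_cancel₀ (by norm_num), C_1]
  refine ⟨C (54872 : ℚ)⁻¹ * (-320 * X ^ 3 - 1420 * X ^ 2 - 2464 * X + 206),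
    C (54872 : ℚ)⁻¹ * (64 * X ^ 4 + 332 * X ^ 3 + 805 * X ^ 2 + 783 * X + 689), ?_⟩
  rw [derivative_q, q]
  linear_combination h

theorem natDegree_q : q.natDegree = 5 := by
  rw [q]; compute_degree!

end IronShioda

/-- The `[19,1,1,1,1,1]` fibration: `4 (g² − f³) = 27 ·(4t⁵+15t⁴+38t³+61t²+62t+59)` in `ℚ[t]`;
in particular `g² − f³` is a nonzero constant multiple of a quintic, so the discriminant of
`y² = x³ − 27 f x + 54 g` vanishes at exactly five finite values of `t` (in an algebraic
closure of `ℚ`). -/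
theorem stmt_0 :
    let f : Polynomial ℚ := X ^ 8 + 6 * X ^ 7 + 21 * X ^ 6 + 50 * X ^ 5 + 86 * X ^ 4 +
      114 * X ^ 3 + 109 * X ^ 2 + 74 * X + 28
    let g : Polynomial ℚ := X ^ 12 + 9 * X ^ 11 + 45 * X ^ 10 + 156 * X ^ 9 + 408 * X ^ 8 +
      846 * X ^ 7 + 1416 * X ^ 6 + 1932 * X ^ 5 + 2136 * X ^ 4 + 1873 * X ^ 3 +
      C (2517 / 2 : ℚ) * X ^ 2 + C (1167 / 2 : ℚ) * X + C (299 / 2 : ℚ)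
    let q : Polynomial ℚ := 4 * X ^ 5 + 15 * X ^ 4 + 38 * X ^ 3 + 61 * X ^ 2 + 62 * X + 59
    4 * (g ^ 2 - f ^ 3) = 27 * q ∧
      (∃ c : ℚ, c ≠ 0 ∧ g ^ 2 - f ^ 3 = C c * q) ∧
      ((g ^ 2 - f ^ 3).aroots (AlgebraicClosure ℚ)).toFinset.card = 5 := by
  open IronShioda in
  refine ⟨four_mul_g_sq_sub_f_cube, ⟨27 / 4, by norm_num, g_sq_sub_f_cube⟩, ?_⟩
  show ((g ^ 2 - f ^ 3).aroots (AlgebraicClosure ℚ)).toFinset.card = 5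
  rw [g_sq_sub_f_cube, aroots_C_mul _ (by norm_num), separable_q.card_toFinset_aroots, natDegree_q]
end

section
/- Let W be the Weierstrass curve over the rational function field ℚ(t) given by y² = x³ + a₄x + a₆ with a₄ = −27f(t) and a₆ = 54g(t), where f(t) = t⁸+6t⁷+21t⁶+50t⁵+86t⁴+114t³+109t²+74t+28 and g(t) = t¹²+9t¹¹+45t¹⁰+156t⁹+408t⁸+846t⁷+1416t⁶+1932t⁵+2136t⁴+1873t³+(2517t²+1167t+299)/2. Then the discriminant of W equals Δ = −16·27⁴·(4t⁵ + 15t⁴ + 38t³ + 61t² + 62t + 59); in particular Δ ≠ 0, so W is an elliptic curve over ℚ(t). -/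
instance : CharZero (RatFunc ℚ) :=
  charZero_of_injective_algebraMap (algebraMap ℚ (RatFunc ℚ)).injective

/-- The Weierstrass curve `y² = x³ − 27 f(t) x + 54 g(t)` over `ℚ(t)` has discriminant
`Δ = −16 · 27⁴ · (4t⁵ + 15t⁴ + 38t³ + 61t² + 62t + 59)`; in particular `Δ ≠ 0`, so it is an
elliptic curve over `ℚ(t)`. -/
theorem stmt_1 :
    let t : RatFunc ℚ := RatFunc.X
    let f : RatFunc ℚ := t ^ 8 + 6 * t ^ 7 + 21 * t ^ 6 + 50 * t ^ 5 + 86 * t ^ 4 +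
      114 * t ^ 3 + 109 * t ^ 2 + 74 * t + 28
    let g : RatFunc ℚ := t ^ 12 + 9 * t ^ 11 + 45 * t ^ 10 + 156 * t ^ 9 + 408 * t ^ 8 +
      846 * t ^ 7 + 1416 * t ^ 6 + 1932 * t ^ 5 + 2136 * t ^ 4 + 1873 * t ^ 3 +
      (2517 * t ^ 2 + 1167 * t + 299) / 2
    let W : WeierstrassCurve (RatFunc ℚ) := ⟨0, 0, 0, -27 * f, 54 * g⟩
    W.Δ = -16 * 27 ^ 4 * (4 * t ^ 5 + 15 * t ^ 4 + 38 * t ^ 3 + 61 * t ^ 2 + 62 * t + 59) ∧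
      W.Δ ≠ 0 := by
  intro t f g W
  have h2 : (2 : RatFunc ℚ) ≠ 0 := two_ne_zero
  have hq : (4 * t ^ 5 + 15 * t ^ 4 + 38 * t ^ 3 + 61 * t ^ 2 + 62 * t + 59 : RatFunc ℚ) ≠ 0 := by
    have : (4 * t ^ 5 + 15 * t ^ 4 + 38 * t ^ 3 + 61 * t ^ 2 + 62 * t + 59 : RatFunc ℚ) =
        algebraMap (Polynomial ℚ) (RatFunc ℚ)
          (4 * Polynomial.X ^ 5 + 15 * Polynomial.X ^ 4 + 38 * Polynomial.X ^ 3 +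
            61 * Polynomial.X ^ 2 + 62 * Polynomial.X + 59) := by
      simp only [map_add, map_mul, map_pow, map_ofNat, RatFunc.algebraMap_X, t]
    rw [this]
    apply RatFunc.algebraMap_ne_zero
    intro hc
    have := congrArg (Polynomial.eval 0) hc
    simp at this
  have hΔ : W.Δ = -16 * 27 ^ 4 *
      (4 * t ^ 5 + 15 * t ^ 4 + 38 * t ^ 3 + 61 * t ^ 2 + 62 * t + 59) := by
    show (-(_ : RatFunc ℚ) ^ 2 * _ - 8 * _ ^ 3 - 27 * _ ^ 2 + 9 * _ * _ * _) = _
    simp only [WeierstrassCurve.b₂, WeierstrassCurve.b₄, WeierstrassCurve.b₆,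
      WeierstrassCurve.b₈, W, f, g]
    field_simp
    ring
  exact ⟨hΔ, hΔ ▸ by
    refine mul_ne_zero (by norm_num) hq⟩
end

section
/- Let F be a field of characteristic 19 containing an element i with i² = −1 (for instance F = 𝔽₃₆₁ = GF(19,2)). Then in the rational function field F(t) one has the identity (7i(t+3)¹⁵/(t−5)⁹)² = X³ − 8(t+3)(t−5)⁷·X − 3(t+3)¹¹(t−5) evaluated at X = 2(t+3)¹⁰/(t−5)⁶. That is, R = (2(t+3)¹⁰/(t−5)⁶, 7i(t+3)¹⁵/(t−5)⁹) is an F(t)-rational point on the elliptic curve y² = x³ − 8(t+3)(t−5)⁷x − 3(t+3)¹¹(t−5). -/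
set_option maxHeartbeats 1000000 in
/-- Let `F` be a field of characteristic 19 containing `i` with `i² = −1` (e.g. `𝔽₃₆₁`).
Then `R = (2(t+3)¹⁰/(t−5)⁶, 7i(t+3)¹⁵/(t−5)⁹)` is an `F(t)`-rational point on the elliptic
curve `y² = x³ − 8(t+3)(t−5)⁷ x − 3(t+3)¹¹(t−5)`. -/
theorem stmt_11 (F : Type*) [Field F] [CharP F 19] (i : F) (hi : i ^ 2 = -1) :
    let t : RatFunc F := RatFunc.X
    let x₀ : RatFunc F := 2 * (t + 3) ^ 10 / (t - 5) ^ 6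
    let y₀ : RatFunc F := 7 * RatFunc.C i * (t + 3) ^ 15 / (t - 5) ^ 9
    y₀ ^ 2 = x₀ ^ 3 - 8 * (t + 3) * (t - 5) ^ 7 * x₀ - 3 * (t + 3) ^ 11 * (t - 5) := by
  intro t x₀ y₀
  have hpoly : (Polynomial.X - Polynomial.C 5 : Polynomial F) ≠ 0 :=
    Polynomial.X_sub_C_ne_zero 5
  have h5 : t - 5 ≠ 0 := by
    have heq : (RatFunc.X : RatFunc F) - 5 =
        algebraMap (Polynomial F) (RatFunc F) (Polynomial.X - Polynomial.C 5) := by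
      rw [map_sub, RatFunc.algebraMap_X, RatFunc.algebraMap_C,
        show ((5:F)) = ((5:ℕ):F) by norm_num, map_natCast]
      norm_num
    simp only [t, heq]
    exact RatFunc.algebraMap_ne_zero hpoly
  have hi' : (RatFunc.C i) ^ 2 = -1 := by
    rw [← map_pow, hi, map_neg, map_one]
  have h19 : (19 : RatFunc F) = 0 := by
    have h1 : ((19 : ℕ) : RatFunc F) = RatFunc.C ((19 : ℕ) : F) := (map_natCast RatFunc.C 19).symm
    rw [show (19 : RatFunc F) = ((19 : ℕ) : RatFunc F) by norm_cast, h1,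
      CharP.cast_eq_zero F 19, map_zero]
  set u : RatFunc F := (t - 5)⁻¹ with hu_def
  have hu : (t - 5) * u = 1 := mul_inv_cancel₀ h5
  simp only [x₀, y₀, div_eq_mul_inv, ← inv_pow, ← hu_def]
  linear_combination (49 * (t + 3) ^ 30 * u ^ 18) * hi' +
    (-3 * (t + 3) ^ 30 * u ^ 18 + (t + 3) ^ 11 * (t - 5)) * h19 +
    (16 * (t + 3) ^ 11 * (t - 5) *
      (1 + (t-5)*u + ((t-5)*u)^2 + ((t-5)*u)^3 + ((t-5)*u)^4 + ((t-5)*u)^5)) * hu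
end

section
/- There exists a matrix U ∈ GL₂(ℤ) (an integer 2×2 matrix with determinant ±1) such that Uᵀ · [[2, 1], [1, 10]] · U = [[266, −95], [−95, 34]]. (Hence the even positive definite binary lattice with Gram matrix [[266, −95], [−95, 34]] is isomorphic to the transcendental lattice of S, so the orthogonal complement L(3), whose intersection form is −3·[[266, −95], [−95, 34]], is similar to the transcendental lattice, confirming Shioda's conjecture at p = 3.) -/
open Matrix

/-- There is a matrix `U ∈ GL₂(ℤ)` with `Uᵀ · [[2,1],[1,10]] · U = [[266,−95],[−95,34]]`:
the even positive definite binary lattice with Gram matrix `[[266,−95],[−95,34]]` is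
isomorphic to the transcendental lattice of `S`, so `L(3)`, with intersection form
`−3·[[266,−95],[−95,34]]`, is similar to the transcendental lattice (Shioda's conjecture at
`p = 3`). -/
theorem stmt_12 :
    ∃ U : Matrix (Fin 2) (Fin 2) ℤ, IsUnit U.det ∧
      Uᵀ * !![2, 1; 1, 10] * U = !![266, -95; -95, 34] := by
  refine ⟨!![-8, 3; -3, 1], ?_, ?_⟩
  · simp [Matrix.det_fin_two_of]
  · ext i j
    fin_cases i <;> fin_cases j <;>
      simp [Matrix.mul_apply, Fin.sum_univ_succ]
end
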